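/- Fix ε ∈ (0,1). Let P : [1,∞) → ℝ be continuous, strictly positive, and strictly decreasing, and suppose P satisfies the reflection equation for ε. Then for every x ∈ [1, 2+ε], ∫₀^{1/x} s·P(2 + ε − s) ds < 1/(2x²). -/

import Mathlib

noncomputable section

/-- `P` satisfies the reflection equation for `ε`: for every x ≥ 1,
(1/x³)·P(2 + ε − 1/x) − (1/x)·∫₀^{1/x} s·P(2 + ε − s) ds + 1/(2x³) = P(x). -/
def SatisfiesReflectionEq (ε : ℝ) (P : ℝ → ℝ) : Prop :=
  ∀ x : ℝ, 1 ≤ x →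
    (1 / x ^ 3) * P (2 + ε - 1 / x)
      - (1 / x) * (∫ s in (0:ℝ)..(1 / x), s * P (2 + ε - s))
      + 1 / (2 * x ^ 3) = P x

/-!
Substituting `s = t / x` gives `x² ∫₀^{1/x} s P(2+ε−s) ds = ∫₀¹ t P(2+ε−t/x) dt`, and since
`P` is decreasing this is at most the value `∫₀¹ t P(2+ε−t) dt` at `x = 1`. The reflection
equation at `x = 1` evaluates the latter as `1/2 + P(1+ε) − P(1) < 1/2`.
-/

open intervalIntegral

theorem integral_id_mul_comp_div (f : ℝ → ℝ) {c : ℝ} (hc : c ≠ 0) :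
    ∫ t in (0:ℝ)..1, t * f (t / c) = c ^ 2 * ∫ s in (0:ℝ)..(1 / c), s * f s := by
  have hrescale : ∀ t, t * f (t / c) = c * ((t / c) * f (t / c)) := fun t => by
    field_simp
  simp_rw [hrescale]
  rw [integral_const_mul, integral_comp_div (fun s => s * f s) hc, smul_eq_mul, zero_div]
  ring

theorem integral_id_mul_comp_div_le {f : ℝ → ℝ} (hf : MonotoneOn f (Set.Icc 0 1)) {c : ℝ}
    (hc : 1 ≤ c) :
    ∫ t in (0:ℝ)..1, t * f (t / c) ≤ ∫ t in (0:ℝ)..1, t * f t := by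
  have hc0 : 0 < c := one_pos.trans_le hc
  have hdiv_mem : ∀ t ∈ Set.Icc (0:ℝ) 1, t / c ∈ Set.Icc (0:ℝ) 1 := fun t ht =>
    ⟨div_nonneg ht.1 hc0.le, (div_le_self ht.1 hc).trans ht.2⟩
  have hint : ∀ g : ℝ → ℝ, MonotoneOn g (Set.Icc 0 1) →
      IntervalIntegrable (fun t => t * g t) MeasureTheory.volume 0 1 := fun g hg => by
    rw [← Set.uIcc_of_le zero_le_one] at hg
    exact hg.intervalIntegrable.continuousOn_mul continuousOn_id
  refine integral_mono_on zero_le_one (hint _ ?_) (hint f hf) fun t ht => ?_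
  · exact hf.comp (fun a _ b _ hab => div_le_div_of_nonneg_right hab hc0.le) hdiv_mem
  · exact mul_le_mul_of_nonneg_left
      (hf (hdiv_mem t ht) ht (div_le_self ht.1 hc)) ht.1

theorem SatisfiesReflectionEq.integral_one_eq {ε : ℝ} {P : ℝ → ℝ}
    (hrefl : SatisfiesReflectionEq ε P) :
    ∫ s in (0:ℝ)..1, s * P (2 + ε - s) = 1 / 2 + P (1 + ε) - P 1 := by
  have h := hrefl 1 le_rfl
  simp only [one_pow, div_one, mul_one, one_mul] at h
  rw [show 1 + ε = 2 + ε - 1 by ring]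
  linarith

theorem integral_bound (ε : ℝ) (hε0 : 0 < ε) (P : ℝ → ℝ)
    (hanti : StrictAntiOn P (Set.Ici (1:ℝ)))
    (hrefl : SatisfiesReflectionEq ε P) :
    ∀ x : ℝ, 1 ≤ x → x ≤ 2 + ε →
      (∫ s in (0:ℝ)..(1 / x), s * P (2 + ε - s)) < 1 / (2 * x ^ 2) := by
  intro x hx _
  have hmono : MonotoneOn (fun s => P (2 + ε - s)) (Set.Icc 0 1) :=
    fun a ha b hb hab => hanti.antitoneOn (Set.mem_Ici.2 (by linarith [hb.2]))
      (Set.mem_Ici.2 (by linarith [ha.2])) (by linarith)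
  have hPε : P (1 + ε) < P 1 :=
    hanti Set.self_mem_Ici (Set.mem_Ici.2 (by linarith)) (by linarith)
  have hx_sq : x ^ 2 * ∫ s in (0:ℝ)..(1 / x), s * P (2 + ε - s) < 1 / 2 := by
    rw [← integral_id_mul_comp_div _ (one_pos.trans_le hx).ne']
    calc _ ≤ ∫ t in (0:ℝ)..1, t * P (2 + ε - t) := integral_id_mul_comp_div_le hmono hx
      _ = 1 / 2 + P (1 + ε) - P 1 := hrefl.integral_one_eq
      _ < 1 / 2 := by linarith
  rw [lt_div_iff₀ (by positivity), mul_comm 2, ← mul_assoc]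
  linarith
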